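/- Let X be a finitely supported subset of an invariant set under finitary permutations of A, let Y ⊆ X be a finitely supported subset, and let ≤ be a total order on Y that is finitely supported (as a subset of the product with componentwise action). Then every element of Y is supported by supp(≤) ∪ supp(Y); in particular Y is uniformly supported. Consequently, if X contains no infinite uniformly supported subset, then X contains no infinite finitely supported totally ordered subset (X is not FSM Mostowski infinite). -/

import Mathlib

open Pointwise

/-- The group of finitary permutations of the set `A` of atoms: bijections of `A`
whose set of non-fixed points is finite. -/
def FinPerm (A : Type*) : Subgroup (Equiv.Perm A) where
  carrier := {π : Equiv.Perm A | {a : A | π a ≠ a}.Finite}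
  one_mem' := by simp
  mul_mem' := by
    intro π σ hπ hσ
    refine Set.Finite.subset (Set.Finite.union hπ hσ) ?_
    intro a ha
    simp only [Set.mem_setOf_eq, Set.mem_union] at *
    by_contra h
    push_neg at h
    obtain ⟨h1, h2⟩ := h
    exact ha (by rw [Equiv.Perm.mul_apply, h2, h1])
  inv_mem' := by
    intro π hπ
    refine Set.Finite.subset hπ ?_
    intro a ha
    simp only [Set.mem_setOf_eq] at *
    intro h
    exact ha (π.injective (by simp [h]))

/-- An element `x` is finitely supported if some finite set of atoms supports it. -/
def FinSupp (A : Type*) {X : Type*} [SMul (FinPerm A) X] (x : X) : Prop :=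
  ∃ S : Finset A, MulAction.Supports (FinPerm A) (S : Set A) x

/-- The least support of an element: the intersection of all finite sets of atoms
supporting it. -/
def supp (A : Type*) {X : Type*} [SMul (FinPerm A) X] (x : X) : Set A :=
  ⋂₀ {S : Set A | S.Finite ∧ MulAction.Supports (FinPerm A) S x}

/-- A set `S` of atoms supports a function `f` if `f (π • x) = π • f x` for every
finitary permutation `π` fixing `S` pointwise. -/
def SuppFun (A : Type*) {X Y : Type*} [SMul (FinPerm A) X] [SMul (FinPerm A) Y]
    (S : Set A) (f : X → Y) : Prop :=
  ∀ π : FinPerm A, (∀ a ∈ S, π • a = a) → ∀ x, f (π • x) = π • f x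

/-- A set `S` of atoms supports a function `f` between the subsets `X` and `Y` if, for
every finitary permutation `π` fixing `S` pointwise and every `x ∈ X`, we have
`π • x ∈ X`, `π • f x ∈ Y` and `f (π • x) = π • f x`. -/
def SuppFunOn (A : Type*) {U V : Type*} [SMul (FinPerm A) U] [SMul (FinPerm A) V]
    (S : Set A) (X : Set U) (Y : Set V) (f : U → V) : Prop :=
  ∀ π : FinPerm A, (∀ a ∈ S, π • a = a) →
    ∀ x ∈ X, π • x ∈ X ∧ π • f x ∈ Y ∧ f (π • x) = π • f x

/-- `℘_fs(X)`: the finitely supported subsets of the set `X`. -/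
def Pfs (A : Type*) {U : Type*} [SMul (FinPerm A) U] (X : Set U) : Set (Set U) :=
  {Z : Set U | Z ⊆ X ∧ FinSupp A Z}


/-- `R`, viewed as a set of pairs, is a total order relation on the subset `Y`. -/
def IsTotalOrderOn {W : Type*} (Y : Set W) (R : Set (W × W)) : Prop :=
  (∀ p ∈ R, p.1 ∈ Y ∧ p.2 ∈ Y) ∧
  (∀ y ∈ Y, (y, y) ∈ R) ∧
  (∀ x y : W, (x, y) ∈ R → (y, x) ∈ R → x = y) ∧
  (∀ x y z : W, (x, y) ∈ R → (y, z) ∈ R → (x, z) ∈ R) ∧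
  (∀ x ∈ Y, ∀ y ∈ Y, (x, y) ∈ R ∨ (y, x) ∈ R)

/-!
A finitary permutation fixing a set `F` is a product of transpositions of atoms outside
`F`, so a set `S` supports `x` as soon as every transposition of two atoms outside `S` fixes `x`.
Writing `(a b) = (c b)(a c)(c b)` with a fresh atom `c` shows that two finite supports intersect
to a support, hence `supp(x)` supports `x`.
A transposition `(a b)` with `a, b ∉ supp(≤) ∪ supp(Y)` fixes `≤` and `Y`; if it moved some
`y ∈ Y`, then `y` and `(a b) • y` would be comparable, say `y ≤ (a b) • y`, and applying `(a b)`
would give `(a b) • y ≤ y`, contradicting antisymmetry.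
-/

namespace FinPerm

open Equiv MulAction

variable {A : Type*} [DecidableEq A]

def swap (a b : A) : FinPerm A := ⟨Equiv.swap a b, finite_compl_fixedBy_swap⟩

theorem swap_mul_self (a b : A) : swap a b * swap a b = 1 :=
  Subtype.ext (Equiv.swap_mul_self a b)

theorem swap_comm (a b : A) : swap a b = swap b a :=
  Subtype.ext (Equiv.swap_comm a b)

theorem swap_mul_swap_mul_swap {a b c : A} (hab : a ≠ b) (hac : a ≠ c) :
    swap c b * swap a c * swap c b = swap a b :=
  Subtype.ext ((Equiv.swap_mul_swap_mul_swap hac hab).trans (Equiv.swap_comm b a))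

theorem mem_closure_swaps_of_fixes {F : Set A} {π : Perm A} (hπ : π ∈ FinPerm A)
    (hF : ∀ a ∈ F, π a = a) :
    π ∈ Subgroup.closure {σ | ∃ a ∉ F, ∃ b ∉ F, a ≠ b ∧ σ = Equiv.swap a b} := by
  refine (mem_closure_isSwap ?_).2 ⟨hπ, fun a ↦ ?_⟩
  · rintro σ ⟨a, -, b, -, hab, rfl⟩
    exact ⟨a, b, hab, rfl⟩
  by_cases hfix : π a = a
  · rw [hfix]
    exact mem_orbit_self a
  have ha : a ∉ F := fun h ↦ hfix (hF a h)
  have hπa : π a ∉ F := fun h ↦ hfix (π.injective (hF _ h))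
  exact ⟨⟨_, Subgroup.subset_closure ⟨a, ha, π a, hπa, Ne.symm hfix, rfl⟩⟩,
    swap_apply_left a (π a)⟩

end FinPerm

namespace MulAction

open Equiv

variable {A X : Type*}

theorem Supports.swap_smul_eq [DecidableEq A] [SMul (FinPerm A) X] {S : Set A} {x : X}
    (h : Supports (FinPerm A) S x) {a b : A} (ha : a ∉ S) (hb : b ∉ S) :
    FinPerm.swap a b • x = x :=
  h _ fun c hc ↦ swap_apply_of_ne_of_ne (by rintro rfl; exact ha hc) (by rintro rfl; exact hb hc)

theorem supports_of_swap_smul_eq [DecidableEq A] [MulAction (FinPerm A) X] {S : Set A} {x : X}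
    (h : ∀ a ∉ S, ∀ b ∉ S, a ≠ b → FinPerm.swap a b • x = x) : Supports (FinPerm A) S x := by
  intro π hπ
  let H := (stabilizer (FinPerm A) x).map (FinPerm A).subtype
  have hswaps : Subgroup.closure {σ | ∃ a ∉ S, ∃ b ∉ S, a ≠ b ∧ σ = Equiv.swap a b} ≤ H := by
    rw [Subgroup.closure_le]
    rintro σ ⟨a, ha, b, hb, hab, rfl⟩
    exact ⟨FinPerm.swap a b, h a ha b hb hab, rfl⟩
  obtain ⟨σ, hσ, hσπ⟩ := hswaps (FinPerm.mem_closure_swaps_of_fixes π.2 fun a ha ↦ hπ ha)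
  rwa [← Subtype.ext hσπ]

variable [Infinite A] [MulAction (FinPerm A) X]

theorem Supports.inter {S T : Set A} {x : X} (hS : Supports (FinPerm A) S x)
    (hT : Supports (FinPerm A) T x) (hSf : S.Finite) (hTf : T.Finite) :
    Supports (FinPerm A) (S ∩ T) x := by
  classical
  have cross : ∀ a b, a ∉ S → b ∉ T → a ≠ b → FinPerm.swap a b • x = x := by
    intro a b ha hb hab
    obtain ⟨c, hc⟩ := ((hSf.union hTf).union (Set.toFinite {a, b})).infinite_compl.nonempty
    simp only [Set.mem_compl_iff, Set.mem_union, Set.mem_insert_iff, Set.mem_singleton_iff,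
      not_or] at hc
    obtain ⟨⟨hcS, hcT⟩, hca, hcb⟩ := hc
    rw [← FinPerm.swap_mul_swap_mul_swap hab (Ne.symm hca), mul_smul, mul_smul, hT.swap_smul_eq hcT hb,
      hS.swap_smul_eq ha hcS, hT.swap_smul_eq hcT hb]
  refine supports_of_swap_smul_eq fun a ha b hb hab ↦ ?_
  rw [Set.mem_inter_iff, not_and_or] at ha hb
  rcases ha with ha | ha <;> rcases hb with hb | hb
  · exact hS.swap_smul_eq ha hb
  · exact cross a b ha hb hab
  · rw [FinPerm.swap_comm]
    exact cross b a hb ha hab.symm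
  · exact hT.swap_smul_eq ha hb

/-- An `x` without finite support has `supp A x = univ`, which supports `x` trivially. -/
theorem supports_supp (x : X) : Supports (FinPerm A) (supp A x) x := by
  classical
  refine supports_of_swap_smul_eq fun a ha b hb _ ↦ ?_
  simp only [supp, Set.mem_sInter, Set.mem_ofPred_eq, not_forall, exists_prop] at ha hb
  obtain ⟨S, ⟨hSf, hS⟩, haS⟩ := ha
  obtain ⟨T, ⟨hTf, hT⟩, hbT⟩ := hb
  exact (hS.inter hT hSf hTf).swap_smul_eq (fun h ↦ haS h.1) (fun h ↦ hbT h.2)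

end MulAction

theorem FinSupp.finite_supp {A X : Type*} [SMul (FinPerm A) X] {x : X} (hx : FinSupp A x) :
    (supp A x).Finite :=
  let ⟨S, hS⟩ := hx
  S.finite_toSet.subset (Set.sInter_subset_of_mem ⟨S.finite_toSet, hS⟩)

namespace IsTotalOrderOn

open MulAction

theorem smul_eq_self_of_mul_self_eq_one {G W : Type*} [Group G] [MulAction G W]
    {Y : Set W} {R : Set (W × W)} (hR : IsTotalOrderOn Y R) {g : G} (hg : g * g = 1)
    (hgR : g • R = R) (hgY : g • Y = Y) {y : W} (hy : y ∈ Y) : g • y = y := by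
  obtain ⟨-, -, antisymm, -, total⟩ := hR
  have hmap : ∀ u v, (u, v) ∈ R → (g • u, g • v) ∈ R := fun u v h ↦
    hgR ▸ Set.smul_mem_smul_set (a := g) h
  have hgg : g • g • y = y := by rw [← mul_smul, hg, one_smul]
  rcases total y hy (g • y) (hgY ▸ Set.smul_mem_smul_set hy) with h | h
  · exact (antisymm _ _ h (by simpa only [hgg] using hmap _ _ h)).symm
  · exact antisymm _ _ h (by simpa only [hgg] using hmap _ _ h)

variable {A U : Type*} [Infinite A] [MulAction (FinPerm A) U] {Y : Set U} {R : Set (U × U)}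

theorem supports_of_mem (hTO : IsTotalOrderOn Y R) {y : U} (hy : y ∈ Y) :
    Supports (FinPerm A) (supp A R ∪ supp A Y) y := by
  classical
  refine supports_of_swap_smul_eq fun a ha b hb _ ↦ ?_
  rw [Set.mem_union, not_or] at ha hb
  exact hTO.smul_eq_self_of_mul_self_eq_one (FinPerm.swap_mul_self a b)
    ((supports_supp R).swap_smul_eq ha.1 hb.1) ((supports_supp Y).swap_smul_eq ha.2 hb.2) hy

theorem exists_finset_supports (hTO : IsTotalOrderOn Y R) (hY : FinSupp A Y) (hR : FinSupp A R) :
    ∃ S : Finset A, ∀ y ∈ Y, Supports (FinPerm A) (S : Set A) y :=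
  ⟨(hR.finite_supp.union hY.finite_supp).toFinset, fun y hy ↦ by
    simpa only [Set.Finite.coe_toFinset] using hTO.supports_of_mem hy⟩

end IsTotalOrderOn

theorem finSupp_total_order_uniformly_supported_general {A U : Type*} [Infinite A]
    [MulAction (FinPerm A) U]
    (X : Set U) :
    (∀ (Y : Set U) (R : Set (U × U)), Y ⊆ X → FinSupp A Y → FinSupp A R →
      IsTotalOrderOn Y R →
      (∀ y ∈ Y, MulAction.Supports (FinPerm A) (supp A R ∪ supp A Y) y) ∧
      (∃ S : Finset A, ∀ y ∈ Y, MulAction.Supports (FinPerm A) (S : Set A) y)) ∧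
    ((¬ ∃ Z : Set U, Z ⊆ X ∧ Z.Infinite ∧
        ∃ S : Finset A, ∀ z ∈ Z, MulAction.Supports (FinPerm A) (S : Set A) z) →
      ¬ ∃ (Y : Set U) (R : Set (U × U)), Y ⊆ X ∧ Y.Infinite ∧ FinSupp A Y ∧
        FinSupp A R ∧ IsTotalOrderOn Y R) := by
  refine ⟨fun Y R _ hY hR hTO ↦
    ⟨fun y hy ↦ hTO.supports_of_mem hy, hTO.exists_finset_supports hY hR⟩, ?_⟩
  rintro hno ⟨Y, R, hYX, hYinf, hY, hR, hTO⟩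
  exact hno ⟨Y, hYX, hYinf, hTO.exists_finset_supports hY hR⟩

/-- let `X` be a finitely supported subset of an invariant set, `Y ⊆ X` a
finitely supported subset and `≤` (represented by the set `R` of pairs, with the
componentwise action) a finitely supported total order on `Y`. Then every element of `Y`
is supported by `supp(≤) ∪ supp(Y)`; in particular `Y` is uniformly supported.
Consequently, if `X` contains no infinite uniformly supported subset then `X` contains
no infinite finitely supported totally ordered subset (it is not FSM Mostowski
infinite). -/
theorem finSupp_total_order_uniformly_supported {A U : Type*} [Infinite A]
    [MulAction (FinPerm A) U] (hU : ∀ u : U, FinSupp A u)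
    (X : Set U) (hX : FinSupp A X) :
    (∀ (Y : Set U) (R : Set (U × U)), Y ⊆ X → FinSupp A Y → FinSupp A R →
      IsTotalOrderOn Y R →
      (∀ y ∈ Y, MulAction.Supports (FinPerm A) (supp A R ∪ supp A Y) y) ∧
      (∃ S : Finset A, ∀ y ∈ Y, MulAction.Supports (FinPerm A) (S : Set A) y)) ∧
    ((¬ ∃ Z : Set U, Z ⊆ X ∧ Z.Infinite ∧
        ∃ S : Finset A, ∀ z ∈ Z, MulAction.Supports (FinPerm A) (S : Set A) z) →
      ¬ ∃ (Y : Set U) (R : Set (U × U)), Y ⊆ X ∧ Y.Infinite ∧ FinSupp A Y ∧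
        FinSupp A R ∧ IsTotalOrderOn Y R) :=
  finSupp_total_order_uniformly_supported_general X
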